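/- For any n > M_N on a bounded Vilenkin group and any x in the set I_N^{k,l} (with 0 ≤ k < l ≤ N−1), the uniform bound sup_{n > M_N} |K_n^ψ(x)| ≤ c M_l M_k / M_N holds, and for x ∈ I_N^{k,N}, sup_{n > M_N} |K_n^ψ(x)| ≤ c M_k, where c is an absolute constant. -/

import Mathlib

/-!
Write `F_n = n K_n^ψ = ∑_{k<n} D_k^ψ` (`vilenkinDirichletSum`). Splitting off the leading
mixed-radix digit, `n = t M_s + q` with `t < m_s`, `q < M_s`, gives
`F_n = F_{t M_s} + q D_{t M_s} + r_s^t F_q`, hence by induction on `s`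
`‖F_n‖ ≤ ∑_{j ≤ s} m_j (M_{j+1} ‖D_{M_j}‖ + ‖F_{M_j}‖)`.
Since `D_{M_j} = M_j 𝟙_{I_j}` and `F_{M_{j+1}} = (∑_{v < m_j} r_j^v) F_{M_j}` off `I_j`, a nonzero
digit `x_k` kills `D_{M_j}` for `j > k` and gives `‖F_{M_j}‖ ≤ M_{k+1} M_j`, while a second nonzero
digit `x_l`, `l > k`, kills `F_{M_j}` for `j > l`. As `M_j` grows at least geometrically,
`‖F_n‖ ≤ 4 M_{k+1} M_{l+1}` on `I_N^{k,l}` and `‖F_n‖ ≤ 4 M_{k+1} M_{s+1} ≤ 4 B² M_k n` on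
`I_N^{k,N}`, where `B` bounds the `m_j`.
-/

open MeasureTheory Filter Complex

/-- The (bounded) Vilenkin group `G_m = ∏_k Z_{m_k}`. -/
abbrev VilGroup (m : ℕ → ℕ) : Type := Π k, ZMod (m k)

/-- The generalized powers `M_0 = 1`, `M_{k+1} = m_k M_k`. -/
def Mgen (m : ℕ → ℕ) : ℕ → ℕ
  | 0 => 1
  | k + 1 => m k * Mgen m k

/-- The `j`-th digit of `n` in the `M`-adic (mixed radix) number system. -/
def vDigit (m : ℕ → ℕ) (n j : ℕ) : ℕ := (n / Mgen m j) % m j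

/-- The generalized Rademacher functions `r_k(x) = exp(2πi x_k / m_k)`. -/
noncomputable def rademacher (m : ℕ → ℕ) (k : ℕ) (x : VilGroup m) : ℂ :=
  Complex.exp (2 * Real.pi * Complex.I * ((x k).val : ℂ) / (m k : ℂ))

/-- The Vilenkin functions `ψ_n = ∏_k r_k^{n_k}`. -/
noncomputable def vilenkin (m : ℕ → ℕ) (n : ℕ) (x : VilGroup m) : ℂ :=
  ∏ j ∈ Finset.range (n + 1), (rademacher m j x) ^ (vDigit m n j)

/-- The Vilenkin-Dirichlet kernels `D_k^ψ = ∑_{j<k} ψ_j`. -/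
noncomputable def vilenkinDirichlet (m : ℕ → ℕ) (k : ℕ) (x : VilGroup m) : ℂ :=
  ∑ j ∈ Finset.range k, vilenkin m j x

/-- The Vilenkin-Fejér kernels `K_n^ψ = (1/n) ∑_{k<n} D_k^ψ`. -/
noncomputable def vilenkinFejer (m : ℕ → ℕ) (n : ℕ) (x : VilGroup m) : ℂ :=
  (1 / n) * ∑ k ∈ Finset.range n, vilenkinDirichlet m k x

/-- The cylinder `I_N = I_N(0) = {y : y_0 = ⋯ = y_{N-1} = 0}`. -/
def cylV (m : ℕ → ℕ) (N : ℕ) : Set (VilGroup m) := {y | ∀ j < N, y j = 0}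

/-- The Vilenkin interval `I_N(x)`. -/
def cylVAt (m : ℕ → ℕ) (N : ℕ) (x : VilGroup m) : Set (VilGroup m) :=
  {y | ∀ j < N, y j = x j}

/-- `μ` is the normalized Haar measure on `G_m`, characterized by
`μ(I_N(x)) = 1/M_N` for every cylinder. -/
def IsVilHaar (m : ℕ → ℕ) (μ : Measure (VilGroup m)) : Prop :=
  ∀ (N : ℕ) (x : VilGroup m), μ (cylVAt m N x) = (Mgen m N : ENNReal)⁻¹

/-- The `k`-th Vilenkin-Fourier coefficient. -/
noncomputable def vCoef (m : ℕ → ℕ) (μ : Measure (VilGroup m))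
    (f : VilGroup m → ℂ) (k : ℕ) : ℂ :=
  ∫ x, f x * (starRingEnd ℂ) (vilenkin m k x) ∂μ

/-- The partial sums `S_n^ψ f` of the Vilenkin-Fourier series. -/
noncomputable def vPartialSum (m : ℕ → ℕ) (μ : Measure (VilGroup m))
    (f : VilGroup m → ℂ) (n : ℕ) (x : VilGroup m) : ℂ :=
  ∑ k ∈ Finset.range n, vCoef m μ f k * vilenkin m k x

/-- The Vilenkin-Fejér means `σ_n^ψ f = (1/n) ∑_{k<n} S_k^ψ f`. -/
noncomputable def vFejerMean (m : ℕ → ℕ) (μ : Measure (VilGroup m))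
    (f : VilGroup m → ℂ) (n : ℕ) (x : VilGroup m) : ℂ :=
  (1 / n) * ∑ k ∈ Finset.range n, vPartialSum m μ f k x

/-- The set `I_N^{k,l}` for `k < l < N`:
`x_0 = ⋯ = x_{k-1} = 0`, `x_k ≠ 0`, `x_{k+1} = ⋯ = x_{l-1} = 0`, `x_l ≠ 0`. -/
def cylKL (m : ℕ → ℕ) (N k l : ℕ) : Set (VilGroup m) :=
  {x | (∀ j < k, x j = 0) ∧ x k ≠ 0 ∧ (∀ j, k < j → j < l → x j = 0) ∧ x l ≠ 0}

/-- The set `I_N^{k,N}`: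
`x_0 = ⋯ = x_{k-1} = 0`, `x_k ≠ 0`, `x_{k+1} = ⋯ = x_{N-1} = 0`. -/
def cylKN (m : ℕ → ℕ) (N k : ℕ) : Set (VilGroup m) :=
  {x | (∀ j < k, x j = 0) ∧ x k ≠ 0 ∧ ∀ j, k < j → j < N → x j = 0}

open Finset

section Mgen

variable {m : ℕ → ℕ}

lemma Mgen_succ (k : ℕ) : Mgen m (k + 1) = m k * Mgen m k := rfl

lemma Mgen_pos (hm : ∀ k, 2 ≤ m k) (k : ℕ) : 0 < Mgen m k := by
  induction k with
  | zero => exact Nat.one_pos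
  | succ k ih => exact Nat.mul_pos (by linarith [hm k]) ih

lemma Mgen_dvd_Mgen {j i : ℕ} (h : j ≤ i) : Mgen m j ∣ Mgen m i := by
  induction i, h using Nat.le_induction with
  | base => exact dvd_rfl
  | succ i _ ih => exact ih.trans (Dvd.intro_left _ rfl)

lemma two_mul_Mgen_le (hm : ∀ k, 2 ≤ m k) (k : ℕ) : 2 * Mgen m k ≤ Mgen m (k + 1) :=
  Nat.mul_le_mul_right _ (hm k)

lemma Mgen_strictMono (hm : ∀ k, 2 ≤ m k) : StrictMono (Mgen m) :=
  strictMono_nat_of_lt_succ fun k => by linarith [two_mul_Mgen_le hm k, Mgen_pos hm k]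

lemma lt_Mgen_succ (hm : ∀ k, 2 ≤ m k) (n : ℕ) : n < Mgen m (n + 1) :=
  ((Mgen_strictMono hm).id_le n).trans_lt (Mgen_strictMono hm n.lt_succ_self)

lemma sum_range_Mgen_succ_le (hm : ∀ k, 2 ≤ m k) (T : ℕ) :
    ∑ i ∈ range T, Mgen m (i + 1) ≤ 2 * Mgen m T := by
  induction T with
  | zero => simp
  | succ T ih => rw [sum_range_succ]; linarith [two_mul_Mgen_le hm T]

lemma exists_Mgen_le_lt (hm : ∀ k, 2 ≤ m k) {n : ℕ} (hn : 0 < n) :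
    ∃ s, Mgen m s ≤ n ∧ n < Mgen m (s + 1) := by
  classical
  have hex : ∃ s, n < Mgen m (s + 1) :=
    ⟨n, lt_Mgen_succ hm n⟩
  refine ⟨Nat.find hex, ?_, Nat.find_spec hex⟩
  cases h : Nat.find hex with
  | zero => exact hn
  | succ s => exact not_lt.mp (Nat.find_min hex (h ▸ s.lt_succ_self))

end Mgen

section Digits

variable {m : ℕ → ℕ}

lemma vDigit_eq_zero_of_lt {n j : ℕ} (h : n < Mgen m j) : vDigit m n j = 0 := by
  simp [vDigit, Nat.div_eq_of_lt h]

lemma vDigit_mul_Mgen_add_of_lt (hm : ∀ k, 2 ≤ m k) {p j : ℕ} (hp : p < j) (t i : ℕ) :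
    vDigit m (t * Mgen m j + i) p = vDigit m i p := by
  obtain ⟨c, hc⟩ := Mgen_dvd_Mgen (m := m) (Nat.succ_le_of_lt hp)
  have hsplit : t * Mgen m j + i = Mgen m p * (m p * (c * t)) + i := by
    rw [hc, Mgen_succ]; ring
  rw [vDigit, vDigit, hsplit, Nat.mul_add_div (Mgen_pos hm p), Nat.mul_add_mod]

lemma vDigit_mul_Mgen_add_self (hm : ∀ k, 2 ≤ m k) {t j i : ℕ} (ht : t < m j)
    (hi : i < Mgen m j) : vDigit m (t * Mgen m j + i) j = t := by
  rw [vDigit, add_comm, Nat.add_mul_div_right _ _ (Mgen_pos hm j), Nat.div_eq_of_lt hi,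
    zero_add, Nat.mod_eq_of_lt ht]

end Digits

section Characters

variable {m : ℕ → ℕ}

lemma vilenkin_eq_prod_range (hm : ∀ k, 2 ≤ m k) {n T : ℕ} (hn : n < Mgen m T)
    (x : VilGroup m) :
    vilenkin m n x = ∏ p ∈ range T, rademacher m p x ^ vDigit m n p := by
  have hvanish : ∀ S, n < Mgen m S → ∀ p ∈ range (n + 1 + T), p ∉ range S →
      rademacher m p x ^ vDigit m n p = 1 := fun S hS p _ hp => by
    rw [vDigit_eq_zero_of_lt (hS.trans_le ((Mgen_strictMono hm).monotone
      (not_lt.mp (mem_range.not.mp hp)))), pow_zero]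
  rw [vilenkin, prod_subset (range_subset_range.mpr (by omega)) (hvanish _ (lt_Mgen_succ hm n)),
    ← prod_subset (range_subset_range.mpr (by omega)) (hvanish _ hn)]

lemma vilenkin_mul_Mgen_add (hm : ∀ k, 2 ≤ m k) {t j i : ℕ} (ht : t < m j)
    (hi : i < Mgen m j) (x : VilGroup m) :
    vilenkin m (t * Mgen m j + i) x = rademacher m j x ^ t * vilenkin m i x := by
  have hMj : Mgen m j < Mgen m (j + 1) := Mgen_strictMono hm j.lt_succ_self
  have hlt : t * Mgen m j + i < Mgen m (j + 1) := by
    rw [Mgen_succ]; nlinarith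
  rw [vilenkin_eq_prod_range hm hlt, vilenkin_eq_prod_range hm (hi.trans hMj),
    prod_range_succ, prod_range_succ, vDigit_mul_Mgen_add_self hm ht hi,
    vDigit_eq_zero_of_lt hi, pow_zero, mul_one,
    prod_congr rfl fun p hp => by rw [vDigit_mul_Mgen_add_of_lt hm (mem_range.mp hp)]]
  ring

lemma norm_rademacher (k : ℕ) (x : VilGroup m) : ‖rademacher m k x‖ = 1 := by
  rw [rademacher, Complex.norm_exp]
  simp

lemma norm_vilenkin (n : ℕ) (x : VilGroup m) : ‖vilenkin m n x‖ = 1 := by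
  simp [vilenkin, norm_rademacher]

lemma norm_geom_sum_rademacher_le (k t : ℕ) (x : VilGroup m) :
    ‖∑ v ∈ range t, rademacher m k x ^ v‖ ≤ t :=
  (norm_sum_le _ _).trans (by simp [norm_rademacher])

lemma geom_sum_rademacher_eq_zero {k : ℕ} (hk : m k ≠ 0) {x : VilGroup m} (hx : x k ≠ 0) :
    ∑ v ∈ range (m k), rademacher m k x ^ v = 0 := by
  have : NeZero (m k) := ⟨hk⟩
  have hζ := Complex.isPrimitiveRoot_exp (m k) hk
  have hr : rademacher m k x = Complex.exp (2 * Real.pi * Complex.I / m k) ^ (x k).val := by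
    rw [rademacher, ← Complex.exp_nat_mul]
    ring_nf
  have hne : rademacher m k x ≠ 1 := by
    rw [hr, Ne, hζ.pow_eq_one_iff_dvd]
    exact fun hdvd => hx ((ZMod.val_eq_zero _).mp
      (Nat.eq_zero_of_dvd_of_lt hdvd (ZMod.val_lt _)))
  rw [geom_sum_eq hne, hr, ← pow_mul, mul_comm (x k).val, pow_mul, hζ.pow_eq_one, one_pow, sub_self,
    zero_div]

end Characters

section Dirichlet

variable {m : ℕ → ℕ}

lemma norm_vilenkinDirichlet_le (n : ℕ) (x : VilGroup m) : ‖vilenkinDirichlet m n x‖ ≤ n :=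
  (norm_sum_le _ _).trans (by simp [norm_vilenkin])

lemma vilenkinDirichlet_mul_Mgen_add (hm : ∀ k, 2 ≤ m k) {t j q : ℕ} (ht : t < m j)
    (hq : q ≤ Mgen m j) (x : VilGroup m) :
    vilenkinDirichlet m (t * Mgen m j + q) x =
      vilenkinDirichlet m (t * Mgen m j) x + rademacher m j x ^ t * vilenkinDirichlet m q x := by
  rw [vilenkinDirichlet, sum_range_add, vilenkinDirichlet, vilenkinDirichlet, mul_sum]
  congr 1
  exact sum_congr rfl fun i hi =>
    vilenkin_mul_Mgen_add hm ht ((mem_range.mp hi).trans_le hq) x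

lemma vilenkinDirichlet_mul_Mgen (hm : ∀ k, 2 ≤ m k) {t j : ℕ} (ht : t ≤ m j)
    (x : VilGroup m) :
    vilenkinDirichlet m (t * Mgen m j) x =
      (∑ v ∈ range t, rademacher m j x ^ v) * vilenkinDirichlet m (Mgen m j) x := by
  induction t with
  | zero => simp [vilenkinDirichlet]
  | succ t ih =>
    rw [Nat.succ_mul, vilenkinDirichlet_mul_Mgen_add hm ht le_rfl, ih (by omega),
      sum_range_succ]
    ring

lemma norm_vilenkinDirichlet_mul_Mgen_le (hm : ∀ k, 2 ≤ m k) {t j : ℕ} (ht : t ≤ m j)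
    (x : VilGroup m) :
    ‖vilenkinDirichlet m (t * Mgen m j) x‖ ≤ t * ‖vilenkinDirichlet m (Mgen m j) x‖ := by
  rw [vilenkinDirichlet_mul_Mgen hm ht, norm_mul]
  gcongr
  exact norm_geom_sum_rademacher_le j t x

lemma vilenkinDirichlet_Mgen_eq_zero (hm : ∀ k, 2 ≤ m k) {n : ℕ} {x : VilGroup m}
    (hx : x ∉ cylV m n) : vilenkinDirichlet m (Mgen m n) x = 0 := by
  induction n with
  | zero => exact absurd (fun j hj => absurd hj (Nat.not_lt_zero j)) hx
  | succ n ih =>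
    rw [Mgen_succ, vilenkinDirichlet_mul_Mgen hm le_rfl]
    by_cases hxn : x ∈ cylV m n
    · have hx_n : x n ≠ 0 := fun h0 => hx fun j hj => by
        rcases Nat.lt_succ_iff_lt_or_eq.mp hj with hj | rfl
        exacts [hxn j hj, h0]
      rw [geom_sum_rademacher_eq_zero (by linarith [hm n]) hx_n, zero_mul]
    · rw [ih hxn, mul_zero]

end Dirichlet

section DirichletSum

variable {m : ℕ → ℕ}

noncomputable def vilenkinDirichletSum (m : ℕ → ℕ) (n : ℕ) (x : VilGroup m) : ℂ :=
  ∑ k ∈ range n, vilenkinDirichlet m k x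

lemma norm_vilenkinFejer (n : ℕ) (x : VilGroup m) :
    ‖vilenkinFejer m n x‖ = ‖vilenkinDirichletSum m n x‖ / n := by
  rw [vilenkinFejer, vilenkinDirichletSum, norm_mul, norm_div, norm_one, Complex.norm_natCast,
    one_div_mul_eq_div]

lemma norm_vilenkinDirichletSum_le (n : ℕ) (x : VilGroup m) :
    ‖vilenkinDirichletSum m n x‖ ≤ n * n := by
  refine (norm_sum_le _ _).trans ?_
  simpa using sum_le_sum fun k hk =>
    (norm_vilenkinDirichlet_le (m := m) k x).trans (Nat.cast_le.mpr (mem_range.mp hk).le)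

lemma vilenkinDirichletSum_mul_Mgen_add (hm : ∀ k, 2 ≤ m k) {t j q : ℕ} (ht : t < m j)
    (hq : q ≤ Mgen m j) (x : VilGroup m) :
    vilenkinDirichletSum m (t * Mgen m j + q) x =
      vilenkinDirichletSum m (t * Mgen m j) x + q * vilenkinDirichlet m (t * Mgen m j) x +
        rademacher m j x ^ t * vilenkinDirichletSum m q x := by
  rw [vilenkinDirichletSum, sum_range_add, sum_congr rfl fun i hi =>
    vilenkinDirichlet_mul_Mgen_add hm ht ((mem_range.mp hi).le.trans hq) x,
    sum_add_distrib, sum_const, card_range, nsmul_eq_mul, ← mul_sum, add_assoc]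
  rfl

lemma norm_vilenkinDirichletSum_mul_Mgen_add_le (hm : ∀ k, 2 ≤ m k) {t j q : ℕ}
    (ht : t < m j) (hq : q ≤ Mgen m j) (x : VilGroup m) :
    ‖vilenkinDirichletSum m (t * Mgen m j + q) x‖ ≤ ‖vilenkinDirichletSum m (t * Mgen m j) x‖ +
      Mgen m (j + 1) * ‖vilenkinDirichlet m (Mgen m j) x‖ + ‖vilenkinDirichletSum m q x‖ := by
  have hD : q * ‖vilenkinDirichlet m (t * Mgen m j) x‖ ≤
      Mgen m (j + 1) * ‖vilenkinDirichlet m (Mgen m j) x‖ := by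
    have hqt : (q : ℝ) * t ≤ Mgen m (j + 1) := by
      rw [Mgen_succ, mul_comm (m j)]; push_cast
      exact mul_le_mul (by exact_mod_cast hq) (by exact_mod_cast ht.le) (by positivity)
        (by positivity)
    calc (q : ℝ) * ‖vilenkinDirichlet m (t * Mgen m j) x‖
        ≤ q * (t * ‖vilenkinDirichlet m (Mgen m j) x‖) :=
          mul_le_mul_of_nonneg_left (norm_vilenkinDirichlet_mul_Mgen_le hm ht.le x) (by positivity)
      _ ≤ Mgen m (j + 1) * ‖vilenkinDirichlet m (Mgen m j) x‖ := by
          rw [← mul_assoc]; gcongr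
  rw [vilenkinDirichletSum_mul_Mgen_add hm ht hq]
  refine (norm_add_le _ _).trans (add_le_add ((norm_add_le _ _).trans (add_le_add le_rfl ?_))
    (by rw [norm_mul, norm_pow, norm_rademacher, one_pow, one_mul]))
  rwa [norm_mul, Complex.norm_natCast]

lemma norm_vilenkinDirichletSum_mul_Mgen_le (hm : ∀ k, 2 ≤ m k) {t j : ℕ} (ht : t ≤ m j)
    (x : VilGroup m) :
    ‖vilenkinDirichletSum m (t * Mgen m j) x‖ ≤ t * (Mgen m (j + 1) *
      ‖vilenkinDirichlet m (Mgen m j) x‖ + ‖vilenkinDirichletSum m (Mgen m j) x‖) := by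
  induction t with
  | zero => simp [vilenkinDirichletSum]
  | succ t ih =>
    rw [Nat.succ_mul]
    refine (norm_vilenkinDirichletSum_mul_Mgen_add_le hm ht le_rfl x).trans ?_
    push_cast
    linarith [ih (by omega)]

/-- The bound contributed to `‖n K_n^ψ‖` by the digit of `n` at position `j`. -/
noncomputable def vilenkinMajorant (m : ℕ → ℕ) (x : VilGroup m) (j : ℕ) : ℝ :=
  m j * (Mgen m (j + 1) * ‖vilenkinDirichlet m (Mgen m j) x‖ +
    ‖vilenkinDirichletSum m (Mgen m j) x‖)

lemma vilenkinMajorant_nonneg (x : VilGroup m) (j : ℕ) : 0 ≤ vilenkinMajorant m x j := by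
  unfold vilenkinMajorant; positivity

lemma norm_vilenkinDirichletSum_le_sum_vilenkinMajorant (hm : ∀ k, 2 ≤ m k) (x : VilGroup m)
    {T n : ℕ} (hn : n < Mgen m T) :
    ‖vilenkinDirichletSum m n x‖ ≤ ∑ j ∈ range T, vilenkinMajorant m x j := by
  induction T generalizing n with
  | zero =>
    obtain rfl : n = 0 := by simpa [Mgen] using hn
    simp [vilenkinDirichletSum]
  | succ T ih =>
    rw [sum_range_succ]
    by_cases hnT : n < Mgen m T
    · linarith [ih hnT, vilenkinMajorant_nonneg x T]
    have hM := Mgen_pos hm T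
    have ht : n / Mgen m T < m T := (Nat.div_lt_iff_lt_mul hM).mpr (by rwa [← Mgen_succ])
    have hq : n % Mgen m T < Mgen m T := Nat.mod_lt _ hM
    have hblock := norm_vilenkinDirichletSum_mul_Mgen_add_le hm ht hq.le x
    rw [Nat.div_add_mod'] at hblock
    have hfull := norm_vilenkinDirichletSum_mul_Mgen_le hm ht.le x
    have hcoef : ((n / Mgen m T : ℕ) : ℝ) + 1 ≤ m T := by exact_mod_cast ht
    have hstep : ‖vilenkinDirichletSum m n x‖ ≤
        vilenkinMajorant m x T + ‖vilenkinDirichletSum m (n % Mgen m T) x‖ := by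
      have hA : 0 ≤ (Mgen m (T + 1) : ℝ) * ‖vilenkinDirichlet m (Mgen m T) x‖ +
          ‖vilenkinDirichletSum m (Mgen m T) x‖ := by positivity
      have := mul_le_mul_of_nonneg_right hcoef hA
      unfold vilenkinMajorant
      linarith [norm_nonneg (vilenkinDirichletSum m (Mgen m T) x)]
    linarith [ih hq]

end DirichletSum

section Estimates

variable {m : ℕ → ℕ}

lemma notMem_cylV_of_ne_zero {k j : ℕ} (hkj : k < j) {x : VilGroup m} (hxk : x k ≠ 0) :
    x ∉ cylV m j :=
  fun hx => hxk (hx k hkj)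

lemma vilenkinDirichletSum_Mgen_succ_of_notMem (hm : ∀ k, 2 ≤ m k) {j : ℕ} {x : VilGroup m}
    (hx : x ∉ cylV m j) :
    vilenkinDirichletSum m (Mgen m (j + 1)) x =
      (∑ v ∈ range (m j), rademacher m j x ^ v) * vilenkinDirichletSum m (Mgen m j) x := by
  suffices ∀ t ≤ m j, vilenkinDirichletSum m (t * Mgen m j) x =
      (∑ v ∈ range t, rademacher m j x ^ v) * vilenkinDirichletSum m (Mgen m j) x from
    this _ le_rfl
  intro t ht
  induction t with
  | zero => simp [vilenkinDirichletSum]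
  | succ t ih =>
    rw [Nat.succ_mul, vilenkinDirichletSum_mul_Mgen_add hm ht le_rfl,
      vilenkinDirichlet_mul_Mgen hm (by omega), vilenkinDirichlet_Mgen_eq_zero hm hx,
      ih (by omega), sum_range_succ]
    ring

lemma norm_vilenkinDirichletSum_Mgen_succ_le (hm : ∀ k, 2 ≤ m k) {j : ℕ} {x : VilGroup m}
    (hx : x ∉ cylV m j) :
    ‖vilenkinDirichletSum m (Mgen m (j + 1)) x‖ ≤ m j * ‖vilenkinDirichletSum m (Mgen m j) x‖ := by
  rw [vilenkinDirichletSum_Mgen_succ_of_notMem hm hx, norm_mul]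
  gcongr
  exact norm_geom_sum_rademacher_le j _ x

lemma norm_vilenkinDirichletSum_Mgen_le (hm : ∀ k, 2 ≤ m k) {k : ℕ} {x : VilGroup m}
    (hxk : x k ≠ 0) (i : ℕ) :
    ‖vilenkinDirichletSum m (Mgen m i) x‖ ≤ Mgen m (k + 1) * Mgen m i := by
  have hsmall : ∀ i ≤ k + 1,
      ‖vilenkinDirichletSum m (Mgen m i) x‖ ≤ Mgen m (k + 1) * Mgen m i := fun i hi =>
    (norm_vilenkinDirichletSum_le _ x).trans
      (by gcongr; exact_mod_cast (Mgen_strictMono hm).monotone hi)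
  induction i with
  | zero => exact hsmall 0 (by omega)
  | succ i ih =>
    by_cases hik : i + 1 ≤ k + 1
    · exact hsmall _ hik
    · refine (norm_vilenkinDirichletSum_Mgen_succ_le hm
        (notMem_cylV_of_ne_zero (by omega) hxk)).trans ?_
      rw [Mgen_succ (k := i)]; push_cast
      nlinarith [mul_le_mul_of_nonneg_left ih (Nat.cast_nonneg (m i))]

lemma vilenkinDirichletSum_Mgen_eq_zero (hm : ∀ k, 2 ≤ m k) {k l i : ℕ} (hkl : k < l)
    {x : VilGroup m} (hxk : x k ≠ 0) (hxl : x l ≠ 0) (hli : l < i) :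
    vilenkinDirichletSum m (Mgen m i) x = 0 := by
  induction i, hli using Nat.le_induction with
  | base => rw [vilenkinDirichletSum_Mgen_succ_of_notMem hm (notMem_cylV_of_ne_zero hkl hxk),
      geom_sum_rademacher_eq_zero (by linarith [hm l]) hxl, zero_mul]
  | succ i hli ih => rw [vilenkinDirichletSum_Mgen_succ_of_notMem hm
      (notMem_cylV_of_ne_zero (hkl.trans_le (by omega)) hxk), ih, mul_zero]

end Estimates

section Majorant

variable {m : ℕ → ℕ}

lemma vilenkinMajorant_le (hm : ∀ k, 2 ≤ m k) {k : ℕ} {x : VilGroup m} (hxk : x k ≠ 0)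
    (j : ℕ) : vilenkinMajorant m x j ≤ 2 * Mgen m (k + 1) * Mgen m (j + 1) := by
  have hD : (Mgen m (j + 1) : ℝ) * ‖vilenkinDirichlet m (Mgen m j) x‖ ≤
      Mgen m (k + 1) * Mgen m j := by
    by_cases hjk : j ≤ k
    · exact mul_le_mul (by exact_mod_cast (Mgen_strictMono hm).monotone (by omega))
        (norm_vilenkinDirichlet_le _ x) (norm_nonneg _) (Nat.cast_nonneg _)
    · rw [vilenkinDirichlet_Mgen_eq_zero hm (notMem_cylV_of_ne_zero (by omega) hxk),
        norm_zero, mul_zero]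
      positivity
  have hF := norm_vilenkinDirichletSum_Mgen_le hm hxk j
  calc vilenkinMajorant m x j
      ≤ m j * (Mgen m (k + 1) * Mgen m j + Mgen m (k + 1) * Mgen m j) := by
        unfold vilenkinMajorant; gcongr
    _ = 2 * Mgen m (k + 1) * Mgen m (j + 1) := by rw [Mgen_succ (k := j)]; push_cast; ring

lemma sum_vilenkinMajorant_le (hm : ∀ k, 2 ≤ m k) {k : ℕ} {x : VilGroup m} (hxk : x k ≠ 0)
    (T : ℕ) : ∑ j ∈ range T, vilenkinMajorant m x j ≤ 4 * Mgen m (k + 1) * Mgen m T := by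
  have hgeom : (∑ j ∈ range T, (Mgen m (j + 1) : ℝ)) ≤ 2 * Mgen m T := by
    exact_mod_cast sum_range_Mgen_succ_le hm T
  calc ∑ j ∈ range T, vilenkinMajorant m x j
      ≤ ∑ j ∈ range T, 2 * (Mgen m (k + 1) : ℝ) * Mgen m (j + 1) :=
        sum_le_sum fun j _ => vilenkinMajorant_le hm hxk j
    _ = 2 * Mgen m (k + 1) * ∑ j ∈ range T, (Mgen m (j + 1) : ℝ) := by rw [mul_sum]
    _ ≤ 4 * Mgen m (k + 1) * Mgen m T := by nlinarith [Nat.cast_nonneg (α := ℝ) (Mgen m (k + 1))]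

lemma vilenkinMajorant_eq_zero (hm : ∀ k, 2 ≤ m k) {k l j : ℕ} (hkl : k < l)
    {x : VilGroup m} (hxk : x k ≠ 0) (hxl : x l ≠ 0) (hlj : l < j) :
    vilenkinMajorant m x j = 0 := by
  rw [vilenkinMajorant, vilenkinDirichlet_Mgen_eq_zero hm
    (notMem_cylV_of_ne_zero (hkl.trans hlj) hxk),
    vilenkinDirichletSum_Mgen_eq_zero hm hkl hxk hxl hlj]
  simp

end Majorant

section Fejer

variable {m : ℕ → ℕ}

lemma Mgen_succ_le {B : ℕ} (hB : ∀ k, m k ≤ B) (k : ℕ) :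
    (Mgen m (k + 1) : ℝ) ≤ B * Mgen m k := by
  rw [Mgen_succ]; push_cast
  gcongr
  exact_mod_cast hB k

lemma norm_vilenkinFejer_le_of_ne_zero (hm : ∀ k, 2 ≤ m k) {B : ℕ} (hB : ∀ k, m k ≤ B)
    {k n : ℕ} {x : VilGroup m} (hxk : x k ≠ 0) (hn : 0 < n) :
    ‖vilenkinFejer m n x‖ ≤ 4 * B ^ 2 * Mgen m k := by
  obtain ⟨s, hsn, hns⟩ := exists_Mgen_le_lt hm hn
  have hF := (norm_vilenkinDirichletSum_le_sum_vilenkinMajorant hm x hns).trans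
    (sum_vilenkinMajorant_le hm hxk _)
  have hk := Mgen_succ_le hB k
  have hs := Mgen_succ_le hB s
  have hsn' : (Mgen m s : ℝ) ≤ n := by exact_mod_cast hsn
  rw [norm_vilenkinFejer, div_le_iff₀ (by exact_mod_cast hn)]
  calc ‖vilenkinDirichletSum m n x‖ ≤ 4 * Mgen m (k + 1) * Mgen m (s + 1) := hF
    _ ≤ 4 * (B * Mgen m k) * (B * Mgen m s) := by gcongr
    _ = 4 * B ^ 2 * Mgen m k * Mgen m s := by ring
    _ ≤ 4 * B ^ 2 * Mgen m k * n := by gcongr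

lemma norm_vilenkinFejer_le_of_two_ne_zero (hm : ∀ k, 2 ≤ m k) {B : ℕ} (hB : ∀ k, m k ≤ B)
    {N k l n : ℕ} (hkl : k < l) {x : VilGroup m} (hxk : x k ≠ 0) (hxl : x l ≠ 0)
    (hn : Mgen m N < n) :
    ‖vilenkinFejer m n x‖ ≤ 4 * B ^ 2 * Mgen m l * Mgen m k / Mgen m N := by
  have hnT : n < Mgen m (n + l + 1) :=
    (by omega : n < n + l + 1).trans_le ((Mgen_strictMono hm).id_le _)
  have hF : ‖vilenkinDirichletSum m n x‖ ≤ 4 * Mgen m (k + 1) * Mgen m (l + 1) :=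
    calc ‖vilenkinDirichletSum m n x‖
        ≤ ∑ j ∈ range (n + l + 1), vilenkinMajorant m x j :=
          norm_vilenkinDirichletSum_le_sum_vilenkinMajorant hm x hnT
      _ = ∑ j ∈ range (l + 1), vilenkinMajorant m x j :=
          (sum_subset (range_subset_range.mpr (by omega)) fun j _ hj =>
            vilenkinMajorant_eq_zero hm hkl hxk hxl (by simpa using hj)).symm
      _ ≤ 4 * Mgen m (k + 1) * Mgen m (l + 1) := sum_vilenkinMajorant_le hm hxk _
  have hk := Mgen_succ_le hB k
  have hl := Mgen_succ_le hB l
  have hN : (0 : ℝ) < Mgen m N := by exact_mod_cast Mgen_pos hm N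
  rw [norm_vilenkinFejer]
  calc ‖vilenkinDirichletSum m n x‖ / n
      ≤ 4 * Mgen m (k + 1) * Mgen m (l + 1) / Mgen m N :=
        div_le_div₀ (by positivity) hF hN (by exact_mod_cast hn.le)
    _ ≤ 4 * (B * Mgen m k) * (B * Mgen m l) / Mgen m N := by gcongr
    _ = 4 * B ^ 2 * Mgen m l * Mgen m k / Mgen m N := by ring

end Fejer

/-- **Uniform pointwise bounds for the maximal Fejér kernel.**
On a bounded Vilenkin group there is an absolute constant `c` such that for all
`0 ≤ k < l ≤ N - 1` and `x ∈ I_N^{k,l}`,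
`sup_{n > M_N} |K_n^ψ(x)| ≤ c M_l M_k / M_N`, while for `x ∈ I_N^{k,N}`,
`sup_{n > M_N} |K_n^ψ(x)| ≤ c M_k`. -/
theorem vilenkinFejer_maximal_pointwise_bounds
    (m : ℕ → ℕ) (hm : ∀ k, 2 ≤ m k) (hbd : ∃ B, ∀ k, m k ≤ B) :
    ∃ c : ℝ,
      (∀ N k l : ℕ, k < l → l < N → ∀ x ∈ cylKL m N k l,
        (⨆ n : {n : ℕ // Mgen m N < n}, ‖vilenkinFejer m n.1 x‖) ≤
          c * (Mgen m l : ℝ) * (Mgen m k : ℝ) / (Mgen m N : ℝ)) ∧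
      (∀ N k : ℕ, k < N → ∀ x ∈ cylKN m N k,
        (⨆ n : {n : ℕ // Mgen m N < n}, ‖vilenkinFejer m n.1 x‖) ≤
          c * (Mgen m k : ℝ)) := by
  obtain ⟨B, hB⟩ := hbd
  refine ⟨4 * B ^ 2, fun N k l hkl _ x hx => ?_, fun N k _ x hx => ?_⟩
  · exact Real.iSup_le (fun n => norm_vilenkinFejer_le_of_two_ne_zero hm hB hkl hx.2.1
      hx.2.2.2 n.2) (by positivity)
  · exact Real.iSup_le (fun n => norm_vilenkinFejer_le_of_ne_zero hm hB hx.2.1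
      (Nat.zero_lt_of_lt n.2)) (by positivity)
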